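/- arXiv:1904.06791 — 4 statements merged into one kernel-verified Lean document; each statement's English description precedes it below -/
import Mathlib

section
/- For any κ > 0 and any 0 < α < p, the Lebesgue integral ∫_0^∞ (e^{-u^p} - e^{-u^p κ}) u^{-1-α} du equals α^{-1} Γ(1 - α/p)(κ^{α/p} - 1), where Γ denotes the Gamma function. -/
/-!
Substituting `t = u ^ p` turns the integral into `p⁻¹ ∫₀^∞ (e^{-t} - e^{-κt}) t^{-1-s} dt`
with `s = α / p ∈ (0, 1)`. Integrating by parts against `v = -t^{-s} / s` (the boundary terms
vanish because `e^{-t} - e^{-κt}` is `O(t)` at `0` and bounded) leaves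
`s⁻¹ ∫₀^∞ (κ e^{-κt} - e^{-t}) t^{-s} dt`, a difference of two Gamma integrals equal to
`s⁻¹ Γ(1 - s) (κ ^ s - 1)`.
-/

open MeasureTheory Real Set Filter Topology

lemma exp_neg_sub_exp_neg_le {a b : ℝ} (ha : 0 ≤ a) (hab : a ≤ b) :
    exp (-a) - exp (-b) ≤ b - a := by
  have h : exp (-b) = exp (-a) * exp (-(b - a)) := by rw [← exp_add]; ring_nf
  have hexp : 1 - (b - a) ≤ exp (-(b - a)) := by linarith [add_one_le_exp (-(b - a))]
  rw [h]
  nlinarith [exp_le_one_iff.2 (neg_nonpos.2 ha), exp_pos (-a)]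

lemma abs_exp_neg_sub_exp_neg_le {a b : ℝ} (ha : 0 ≤ a) (hb : 0 ≤ b) :
    |exp (-a) - exp (-b)| ≤ |a - b| := by
  wlog hab : a ≤ b generalizing a b
  · rw [abs_sub_comm, abs_sub_comm a]; exact this hb ha (le_of_not_ge hab)
  rw [abs_of_nonneg (by simpa using hab), abs_of_nonpos (by linarith)]
  linarith [exp_neg_sub_exp_neg_le ha hab]

lemma abs_exp_neg_sub_exp_neg_le_one {a b : ℝ} (ha : 0 ≤ a) (hb : 0 ≤ b) :
    |exp (-a) - exp (-b)| ≤ 1 := by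
  rw [abs_le]
  constructor <;> linarith [exp_le_one_iff.2 (neg_nonpos.2 ha), exp_le_one_iff.2 (neg_nonpos.2 hb),
    exp_pos (-a), exp_pos (-b)]

lemma integrableOn_rpow_mul_exp_neg_mul {a r : ℝ} (ha : 0 < a) (hr : 0 < r) :
    IntegrableOn (fun t : ℝ ↦ t ^ (a - 1) * exp (-(r * t))) (Ioi 0) :=
  .of_integral_ne_zero (by rw [integral_rpow_mul_exp_neg_mul_Ioi ha hr]; positivity)

lemma integrableOn_Ioi_mul_rpow_neg_one_sub {f : ℝ → ℝ} {s C D : ℝ} (hs0 : 0 < s)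
    (hs1 : s < 1) (hf : ContinuousOn f (Ioi 0)) (h0 : ∀ t ∈ Ioc (0 : ℝ) 1, |f t| ≤ C * t)
    (h1 : ∀ t ∈ Ioi (1 : ℝ), |f t| ≤ D) :
    IntegrableOn (fun t ↦ f t * t ^ (-1 - s)) (Ioi 0) := by
  have hmeas : AEStronglyMeasurable (fun t ↦ f t * t ^ (-1 - s)) (volume.restrict (Ioi 0)) :=
    (hf.mul (continuousOn_id.rpow_const fun t ht ↦ Or.inl (ne_of_gt ht))).aestronglyMeasurable
      measurableSet_Ioi
  rw [← Ioc_union_Ioi_eq_Ioi zero_le_one]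
  refine IntegrableOn.union ?_ ?_
  · have hint : IntegrableOn (fun t : ℝ ↦ C * t ^ (-s)) (Ioc 0 1) :=
      ((intervalIntegral.intervalIntegrable_rpow' (by linarith)).const_mul C).1
    refine hint.mono' (hmeas.mono_measure (Measure.restrict_mono Ioc_subset_Ioi_self le_rfl)) ?_
    filter_upwards [ae_restrict_mem measurableSet_Ioc] with t ht
    have hpow : t * t ^ (-1 - s) = t ^ (-s) := by
      rw [← rpow_one_add' ht.1.le (by linarith)]; ring_nf
    calc ‖f t * t ^ (-1 - s)‖ = |f t| * t ^ (-1 - s) := by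
          rw [norm_mul, norm_of_nonneg (rpow_nonneg ht.1.le _), norm_eq_abs]
      _ ≤ C * t * t ^ (-1 - s) := mul_le_mul_of_nonneg_right (h0 t ht) (rpow_nonneg ht.1.le _)
      _ = C * t ^ (-s) := by rw [mul_assoc, hpow]
  · have hint : IntegrableOn (fun t : ℝ ↦ D * t ^ (-1 - s)) (Ioi 1) :=
      (integrableOn_Ioi_rpow_of_lt (by linarith) one_pos).const_mul D
    refine hint.mono' (hmeas.mono_measure
      (Measure.restrict_mono (Ioi_subset_Ioi zero_le_one) le_rfl)) ?_
    filter_upwards [ae_restrict_mem measurableSet_Ioi] with t ht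
    have hpow : 0 ≤ t ^ (-1 - s) := rpow_nonneg (zero_le_one.trans ht.le) _
    rw [norm_mul, norm_of_nonneg hpow, norm_eq_abs]
    exact mul_le_mul_of_nonneg_right (h1 t ht) hpow

lemma integral_rpow_neg_mul_exp_neg_mul {s r : ℝ} (hs1 : s < 1) (hr : 0 < r) :
    ∫ t in Ioi (0 : ℝ), t ^ (-s) * exp (-(r * t)) = r ^ (s - 1) * Gamma (1 - s) := by
  have h := integral_rpow_mul_exp_neg_mul_Ioi (sub_pos.2 hs1) hr
  rwa [sub_sub_cancel_left, one_div, inv_rpow hr.le, ← rpow_neg hr.le, neg_sub] at h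

lemma abs_exp_neg_sub_exp_neg_mul_le {κ t : ℝ} (hκ : 0 ≤ κ) (ht : 0 ≤ t) :
    |exp (-t) - exp (-(t * κ))| ≤ |1 - κ| * t := by
  calc |exp (-t) - exp (-(t * κ))| ≤ |t - t * κ| :=
        abs_exp_neg_sub_exp_neg_le ht (mul_nonneg ht hκ)
    _ = |1 - κ| * t := by rw [← mul_one_sub, abs_mul, abs_of_nonneg ht, mul_comm]

lemma integrableOn_exp_neg_sub_exp_neg_mul_mul_rpow {κ s : ℝ} (hκ : 0 ≤ κ) (hs0 : 0 < s)
    (hs1 : s < 1) :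
    IntegrableOn (fun t ↦ (exp (-t) - exp (-(t * κ))) * t ^ (-1 - s)) (Ioi 0) :=
  integrableOn_Ioi_mul_rpow_neg_one_sub hs0 hs1 (by fun_prop)
    (fun t ht ↦ abs_exp_neg_sub_exp_neg_mul_le hκ ht.1.le)
    (fun t ht ↦ abs_exp_neg_sub_exp_neg_le_one (zero_le_one.trans ht.le)
      (mul_nonneg (zero_le_one.trans ht.le) hκ))

lemma tendsto_exp_neg_sub_exp_neg_mul_mul_rpow_nhdsGT_zero {κ s : ℝ} (hκ : 0 ≤ κ)
    (hs1 : s < 1) :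
    Tendsto (fun t ↦ (exp (-t) - exp (-(t * κ))) * t ^ (-s)) (𝓝[>] 0) (𝓝 0) := by
  have hpow : Tendsto (fun t : ℝ ↦ |1 - κ| * t ^ (1 - s)) (𝓝[>] 0) (𝓝 0) := by
    have h := ((continuous_rpow_const (sub_pos.2 hs1).le).tendsto 0).mono_left
      (nhdsWithin_le_nhds (s := Ioi 0))
    rw [zero_rpow (sub_pos.2 hs1).ne'] at h
    simpa using h.const_mul |1 - κ|
  refine squeeze_zero_norm' ?_ hpow
  filter_upwards [self_mem_nhdsWithin] with t (ht : 0 < t)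
  have hts : t * t ^ (-s) = t ^ (1 - s) := by
    rw [← rpow_one_add' ht.le (by linarith)]; ring_nf
  calc ‖(exp (-t) - exp (-(t * κ))) * t ^ (-s)‖ = |exp (-t) - exp (-(t * κ))| * t ^ (-s) := by
        rw [norm_mul, norm_eq_abs, norm_of_nonneg (rpow_nonneg ht.le _)]
    _ ≤ |1 - κ| * t * t ^ (-s) :=
        mul_le_mul_of_nonneg_right (abs_exp_neg_sub_exp_neg_mul_le hκ ht.le) (rpow_nonneg ht.le _)
    _ = |1 - κ| * t ^ (1 - s) := by rw [mul_assoc, hts]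

theorem integral_exp_neg_sub_exp_neg_mul_mul_rpow {κ s : ℝ} (hκ : 0 < κ) (hs0 : 0 < s)
    (hs1 : s < 1) :
    ∫ t in Ioi (0 : ℝ), (exp (-t) - exp (-(t * κ))) * t ^ (-1 - s)
      = s⁻¹ * Gamma (1 - s) * (κ ^ s - 1) := by
  set u : ℝ → ℝ := fun t ↦ exp (-t) - exp (-(t * κ))
  set u' : ℝ → ℝ := fun t ↦ -exp (-t) + κ * exp (-(t * κ))
  set v : ℝ → ℝ := fun t ↦ -t ^ (-s) / s
  have hu : ∀ t ∈ Ioi (0 : ℝ), HasDerivAt u (u' t) t := fun t _ ↦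
    ((hasDerivAt_neg' t).exp.sub (hasDerivAt_mul_const κ).neg.exp).congr_deriv (by
      simp only [u', Pi.neg_apply]; ring)
  have hv : ∀ t ∈ Ioi (0 : ℝ), HasDerivAt v (t ^ (-1 - s)) t := fun t ht ↦
    ((hasDerivAt_rpow_const (Or.inl (ne_of_gt ht))).neg.div_const s).congr_deriv (by
      field_simp; ring_nf)
  have h_zero : Tendsto (u * v) (𝓝[>] 0) (𝓝 0) := by
    have h := (tendsto_exp_neg_sub_exp_neg_mul_mul_rpow_nhdsGT_zero hκ.le hs1).neg.div_const s
    rw [neg_zero, zero_div] at h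
    exact h.congr fun t ↦ by simp only [Pi.mul_apply, u, v]; ring
  have h_infty : Tendsto (u * v) atTop (𝓝 0) := by
    have hu0 : Tendsto u atTop (𝓝 0) := by
      simpa using tendsto_exp_neg_atTop_nhds_zero.sub
        (tendsto_exp_neg_atTop_nhds_zero.comp (tendsto_id.atTop_mul_const hκ))
    have hv0 : Tendsto v atTop (𝓝 0) := by
      simpa using (tendsto_rpow_neg_atTop hs0).neg.div_const s
    exact (mul_zero (0 : ℝ)) ▸ hu0.mul hv0
  have hΓ₁ := integrableOn_rpow_mul_exp_neg_mul (sub_pos.2 hs1) one_pos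
  have hΓκ := integrableOn_rpow_mul_exp_neg_mul (sub_pos.2 hs1) hκ
  rw [sub_sub_cancel_left] at hΓ₁ hΓκ
  have hu'v : ∀ t, u' t * v t
      = s⁻¹ * (t ^ (-s) * exp (-(1 * t)) - κ * (t ^ (-s) * exp (-(κ * t)))) := fun t ↦ by
    simp only [u', v, one_mul, mul_comm t κ]; field_simp; ring
  have hu'v_int : IntegrableOn (u' * v) (Ioi 0) :=
    IntegrableOn.congr_fun ((hΓ₁.sub (hΓκ.const_mul κ)).const_mul s⁻¹)
      (fun t _ ↦ (hu'v t).symm) measurableSet_Ioi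
  rw [integral_Ioi_mul_deriv_eq_deriv_mul hu hv
      (integrableOn_exp_neg_sub_exp_neg_mul_mul_rpow hκ.le hs0 hs1) hu'v_int h_zero h_infty,
    integral_congr_ae (ae_of_all _ hu'v), integral_const_mul,
    integral_sub hΓ₁ (hΓκ.const_mul κ), integral_const_mul,
    integral_rpow_neg_mul_exp_neg_mul hs1 one_pos,
    integral_rpow_neg_mul_exp_neg_mul hs1 hκ, one_rpow, rpow_sub_one hκ.ne']
  field_simp
  ring

lemma integral_comp_rpow_mul_rpow_neg_one_sub (f : ℝ → ℝ) {p : ℝ} (hp : 0 < p) (α : ℝ) :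
    ∫ u in Ioi (0 : ℝ), f (u ^ p) * u ^ (-1 - α)
      = p⁻¹ * ∫ t in Ioi (0 : ℝ), f t * t ^ (-1 - α / p) := by
  rw [← integral_comp_rpow_Ioi_of_pos (g := fun t ↦ f t * t ^ (-1 - α / p)) hp,
    ← integral_const_mul]
  refine setIntegral_congr_fun measurableSet_Ioi fun u (hu : 0 < u) ↦ ?_
  have hpow : u ^ (p - 1) * (u ^ p) ^ (-1 - α / p) = u ^ (-1 - α) := by
    rw [← rpow_mul hu.le, ← rpow_add hu]
    congr 1
    field_simp
    ring
  rw [smul_eq_mul, ← hpow]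
  field_simp

/-- Lemma 3: for `κ > 0` and `0 < α < p`,
`∫_0^∞ (e^{-u^p} - e^{-u^p κ}) u^{-1-α} du = α⁻¹ Γ(1-α/p)(κ^{α/p} - 1)`. -/
theorem stmt_1 (κ α p : ℝ) (hκ : 0 < κ) (hα : 0 < α) (hαp : α < p) :
    ∫ u in Set.Ioi (0 : ℝ),
        (Real.exp (-(u ^ p)) - Real.exp (-(u ^ p * κ))) * u ^ (-1 - α)
      = α⁻¹ * Real.Gamma (1 - α / p) * (κ ^ (α / p) - 1) := by
  have hp : 0 < p := hα.trans hαp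
  rw [integral_comp_rpow_mul_rpow_neg_one_sub (fun t ↦ exp (-t) - exp (-(t * κ))) hp α,
    integral_exp_neg_sub_exp_neg_mul_mul_rpow hκ (div_pos hα hp) ((div_lt_one hp).2 hαp)]
  field_simp
end

section
/- Let d ≥ 1, let σ be a finite Borel measure on 𝕊^{d-1}, let (Q_ξ)_{ξ∈𝕊^{d-1}} be a Markov kernel from 𝕊^{d-1} to (0,∞), fix 0 < α < p, and define the tempering function q(ξ,u) = ∫_{(0,∞)} e^{-s u^p} Q_ξ(ds) for ξ ∈ 𝕊^{d-1}, u > 0. Define the Borel measures Q(B) = ∫_{𝕊^{d-1}} ∫_{(0,∞)} 1_B(sξ) Q_ξ(ds) σ(dξ) and R(B) = ∫_{ℝ^d} 1_B(x/|x|^{1+1/p}) |x|^{α/p} Q(dx), and for λ, t > 0 set K = ∫_{𝕊^{d-1}} ∫_0^∞ (q(ξ,u) - q(ξ, u e^{λt})) u^{-1-α} du σ(dξ). If R(ℝ^d) < ∞, then K = R(ℝ^d) · α^{-1} Γ(1 - α/p)(e^{λtα} - 1) < ∞. -/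
/-!
With `c = e^{λt}`, the difference `q(ξ,u) - q(ξ,uc)` is `∫ (e^{-s u^p} - e^{-s c^p u^p}) Q_ξ(ds)`.
Writing `e^{-aw} - e^{-bw} = ∫_a^b w e^{-rw} dr` and exchanging integrals, the `u`-integral
against `u^{-1-α}` becomes a Gamma integral, so each `s > 0` contributes
`s^{α/p} α⁻¹ Γ(1-α/p) (c^α - 1)`. Hence `K` is this constant times
`∫∫ s^{α/p} Q_ξ(ds) σ(dξ)`, which is the total mass of `R` because `|sξ| = s` on the sphere.
-/

open MeasureTheory ProbabilityTheory
open scoped ENNReal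
open Set Real

theorem ofReal_exp_neg_mul_sub_exp_neg_mul {w a b : ℝ} (hw : 0 ≤ w) (hab : a ≤ b) :
    ENNReal.ofReal (exp (-(a * w)) - exp (-(b * w))) =
      ∫⁻ c in Ioc a b, ENNReal.ofReal (w * exp (-(c * w))) := by
  have hderiv (c : ℝ) : HasDerivAt (fun c => -exp (-(c * w))) (w * exp (-(c * w))) c :=
    (((hasDerivAt_id' c).mul_const w).fun_neg.exp).fun_neg.congr_deriv (by ring)
  rw [← ofReal_integral_eq_lintegral_ofReal, ← intervalIntegral.integral_of_le hab,
    intervalIntegral.integral_eq_sub_of_hasDerivAt (fun c _ => hderiv c)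
      ((by fun_prop : Continuous fun c => w * exp (-(c * w))).intervalIntegrable _ _)]
  · ring_nf
  · exact (by fun_prop : Continuous fun c => w * exp (-(c * w))).integrableOn_Ioc
  · exact Filter.Eventually.of_forall fun c => by positivity

theorem lintegral_rpow_mul_exp_neg_mul_rpow {p q b : ℝ} (hp : 0 < p) (hq : -1 < q) (hb : 0 < b) :
    ∫⁻ x in Ioi (0 : ℝ), ENNReal.ofReal (x ^ q * exp (-b * x ^ p)) =
      ENNReal.ofReal (b ^ (-(q + 1) / p) * (1 / p) * Gamma ((q + 1) / p)) := by
  have hI := integral_rpow_mul_exp_neg_mul_rpow hp hq hb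
  have hpos : 0 < b ^ (-(q + 1) / p) * (1 / p) * Gamma ((q + 1) / p) := by
    have := Gamma_pos_of_pos (div_pos (neg_lt_iff_pos_add.mp hq) hp)
    positivity
  rw [← hI, ofReal_integral_eq_lintegral_ofReal (.of_integral_ne_zero (hI ▸ hpos.ne'))]
  filter_upwards [ae_restrict_mem measurableSet_Ioi] with x (hx : 0 < x)
  positivity

theorem lintegral_exp_neg_mul_rpow_sub_exp_neg_mul_rpow {α p a b : ℝ} (hα : 0 < α) (hαp : α < p)
    (ha : 0 < a) (hab : a ≤ b) :
    ∫⁻ u in Ioi (0 : ℝ), ENNReal.ofReal ((exp (-(a * u ^ p)) - exp (-(b * u ^ p))) * u ^ (-1 - α)) =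
      ENNReal.ofReal ((b ^ (α / p) - a ^ (α / p)) * Gamma (1 - α / p) / α) := by
  have hp : 0 < p := hα.trans hαp
  calc _ = ∫⁻ u in Ioi (0 : ℝ), ∫⁻ c in Ioc a b,
        ENNReal.ofReal (u ^ (p - 1 - α) * exp (-c * u ^ p)) := by
        refine setLIntegral_congr_fun measurableSet_Ioi fun u (hu : 0 < u) => ?_
        rw [ENNReal.ofReal_mul' (by positivity),
          ofReal_exp_neg_mul_sub_exp_neg_mul (by positivity) hab,
          ← lintegral_mul_const' _ _ ENNReal.ofReal_ne_top]
        refine lintegral_congr fun c => ?_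
        rw [← ENNReal.ofReal_mul (by positivity), show p - 1 - α = p + (-1 - α) by ring,
          rpow_add hu]
        ring_nf
    _ = ∫⁻ c in Ioc a b, ∫⁻ u in Ioi (0 : ℝ),
        ENNReal.ofReal (u ^ (p - 1 - α) * exp (-c * u ^ p)) :=
      lintegral_lintegral_swap (by fun_prop)
    _ = ∫⁻ c in Ioc a b, ENNReal.ofReal (c ^ (α / p - 1) * (Gamma (1 - α / p) / p)) := by
        refine setLIntegral_congr_fun measurableSet_Ioc fun c hc => ?_
        rw [lintegral_rpow_mul_exp_neg_mul_rpow hp (by linarith) (ha.trans hc.1)]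
        congr 1
        have hq : p - 1 - α + 1 = p - α := by ring
        rw [hq, neg_div, sub_div, div_self hp.ne']
        ring_nf
    _ = _ := by
        rw [← ofReal_integral_eq_lintegral_ofReal, integral_mul_const,
          ← intervalIntegral.integral_of_le hab, integral_rpow]
        · congr 1
          rw [sub_add_cancel]
          field_simp
        · exact Or.inl (by linarith [div_pos hα hp])
        · exact ((continuousOn_id.rpow_const fun c hc => Or.inl (ha.trans_le hc.1).ne').mul
            continuousOn_const).integrableOn_Icc.mono_set Ioc_subset_Icc_self
        · filter_upwards [ae_restrict_mem measurableSet_Ioc] with c hc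
          have hc0 : 0 < c := ha.trans hc.1
          have hΓ : 0 < Gamma (1 - α / p) :=
            Gamma_pos_of_pos (by rw [sub_pos, div_lt_one hp]; exact hαp)
          positivity

noncomputable def temperingFunction (μ : Measure ℝ) (p u : ℝ) : ℝ :=
  ∫ s in Ioi (0 : ℝ), exp (-(s * u ^ p)) ∂μ

theorem integrableOn_exp_neg_mul_Ioi {w : ℝ} (hw : 0 ≤ w) (μ : Measure ℝ) [IsFiniteMeasure μ] :
    IntegrableOn (fun s => exp (-(s * w))) (Ioi 0) μ := by
  refine (integrable_const (1 : ℝ)).mono' (by fun_prop) ?_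
  filter_upwards [ae_restrict_mem measurableSet_Ioi] with s (hs : 0 < s)
  rw [norm_of_nonneg (exp_pos _).le, exp_le_one_iff, neg_nonpos]
  positivity

theorem ofReal_temperingFunction_sub_mul (μ : Measure ℝ) [IsFiniteMeasure μ]
    {p u c : ℝ} (hp : 0 ≤ p) (hu : 0 ≤ u) (hc : 1 ≤ c) :
    ENNReal.ofReal (temperingFunction μ p u - temperingFunction μ p (u * c)) =
      ∫⁻ s in Ioi (0 : ℝ), ENNReal.ofReal (exp (-(s * u ^ p)) - exp (-(s * c ^ p * u ^ p))) ∂μ := by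
  have hcp : 1 ≤ c ^ p := one_le_rpow hc hp
  have hu' : IntegrableOn (fun s => exp (-(s * u ^ p))) (Ioi 0) μ :=
    integrableOn_exp_neg_mul_Ioi (by positivity) μ
  have hcu : IntegrableOn (fun s => exp (-(s * c ^ p * u ^ p))) (Ioi 0) μ := by
    simpa only [mul_assoc] using integrableOn_exp_neg_mul_Ioi (w := c ^ p * u ^ p) (by positivity) μ
  have hdiff : temperingFunction μ p u - temperingFunction μ p (u * c) =
      ∫ s in Ioi (0 : ℝ), (exp (-(s * u ^ p)) - exp (-(s * c ^ p * u ^ p))) ∂μ := by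
    simp only [temperingFunction, mul_rpow hu (zero_le_one.trans hc), mul_comm (u ^ p), ← mul_assoc]
    exact (integral_sub hu' hcu).symm
  rw [hdiff]
  refine ofReal_integral_eq_lintegral_ofReal (hu'.sub hcu) ?_
  filter_upwards [ae_restrict_mem measurableSet_Ioi] with s (hs : 0 < s)
  have : s * u ^ p ≤ s * c ^ p * u ^ p :=
    mul_le_mul_of_nonneg_right (le_mul_of_one_le_right hs.le hcp) (by positivity)
  simpa using this

theorem lintegral_temperingFunction_sub_mul_rpow (μ : Measure ℝ) [IsFiniteMeasure μ]
    {α p c : ℝ} (hα : 0 < α) (hαp : α < p) (hc : 1 ≤ c) :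
    ∫⁻ u in Ioi (0 : ℝ), ENNReal.ofReal
        ((temperingFunction μ p u - temperingFunction μ p (u * c)) * u ^ (-1 - α)) =
      (∫⁻ s in Ioi (0 : ℝ), ENNReal.ofReal (s ^ (α / p)) ∂μ) *
        ENNReal.ofReal (α⁻¹ * Gamma (1 - α / p) * (c ^ α - 1)) := by
  have hp : 0 < p := hα.trans hαp
  have hcp : 1 ≤ c ^ p := one_le_rpow hc hp.le
  calc _ = ∫⁻ u in Ioi (0 : ℝ), ∫⁻ s in Ioi (0 : ℝ),
        ENNReal.ofReal ((exp (-(s * u ^ p)) - exp (-(s * c ^ p * u ^ p))) * u ^ (-1 - α)) ∂μ := by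
        refine setLIntegral_congr_fun measurableSet_Ioi fun u (hu : 0 < u) => ?_
        rw [ENNReal.ofReal_mul' (by positivity),
          ofReal_temperingFunction_sub_mul μ hp.le hu.le hc,
          ← lintegral_mul_const' _ _ ENNReal.ofReal_ne_top]
        exact lintegral_congr fun s => (ENNReal.ofReal_mul' (by positivity)).symm
    _ = ∫⁻ s in Ioi (0 : ℝ), (∫⁻ u in Ioi (0 : ℝ),
        ENNReal.ofReal ((exp (-(s * u ^ p)) - exp (-(s * c ^ p * u ^ p))) * u ^ (-1 - α))) ∂μ :=
      lintegral_lintegral_swap (by fun_prop)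
    _ = ∫⁻ s in Ioi (0 : ℝ), ENNReal.ofReal (s ^ (α / p)) *
        ENNReal.ofReal (α⁻¹ * Gamma (1 - α / p) * (c ^ α - 1)) ∂μ := by
        refine setLIntegral_congr_fun measurableSet_Ioi fun s (hs : 0 < s) => ?_
        rw [lintegral_exp_neg_mul_rpow_sub_exp_neg_mul_rpow hα hαp hs
            (le_mul_of_one_le_right hs.le hcp),
          ← ENNReal.ofReal_mul (by positivity), mul_rpow hs.le (by positivity),
          ← rpow_mul (by positivity), mul_div_cancel₀ α hp.ne']
        congr 1
        ring
    _ = _ := lintegral_mul_const' _ _ ENNReal.ofReal_ne_top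

section

variable {E : Type*} [NormedAddCommGroup E] [NormedSpace ℝ E] [MeasurableSpace E] [BorelSpace E]
  [SecondCountableTopology E]

theorem lintegral_bind_map_smul {X : Type*} [MeasurableSpace X] (σ : Measure X) (Q : Kernel X ℝ)
    [IsSFiniteKernel Q] {v : X → E} (hv : Measurable v) {f : E → ℝ≥0∞} (hf : Measurable f) :
    ∫⁻ x, f x ∂σ.bind (fun ξ => (Q ξ).map fun s => s • v ξ) = ∫⁻ ξ, ∫⁻ s, f (s • v ξ) ∂Q ξ ∂σ := by
  have hmeas : Measurable fun ξ => (Q ξ).map fun s => s • v ξ := by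
    refine Measure.measurable_of_measurable_coe _ fun A hA => ?_
    have hmap (ξ : X) : ((Q ξ).map fun s => s • v ξ) A = Q ξ {s | s • v ξ ∈ A} :=
      Measure.map_apply (by fun_prop) hA
    simp_rw [hmap]
    exact Kernel.measurable_kernel_prodMk_left (t := {z : X × ℝ | z.2 • v z.1 ∈ A})
      (hA.preimage (by fun_prop))
  rw [Measure.lintegral_bind hmeas.aemeasurable hf.aemeasurable]
  exact lintegral_congr fun ξ => lintegral_map hf (by fun_prop)

theorem map_withDensity_bind_map_smul_univ (σ : Measure (Metric.sphere (0 : E) 1))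
    (Q : Kernel (Metric.sphere (0 : E) 1) ℝ) [IsSFiniteKernel Q] (hQ : ∀ ξ, Q ξ (Iic 0) = 0)
    (r a : ℝ) :
    ((σ.bind fun ξ => (Q ξ).map fun s : ℝ => s • (ξ : E)).withDensity
        (fun x => ENNReal.ofReal (‖x‖ ^ r))).map (fun x => ‖x‖ ^ a • x) univ =
      ∫⁻ ξ, ∫⁻ s in Ioi (0 : ℝ), ENNReal.ofReal (s ^ r) ∂Q ξ ∂σ := by
  rw [Measure.map_apply (by fun_prop) MeasurableSet.univ, preimage_univ,
    withDensity_apply _ MeasurableSet.univ, Measure.restrict_univ,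
    lintegral_bind_map_smul σ Q measurable_subtype_coe (by fun_prop)]
  refine lintegral_congr fun ξ => ?_
  have hpos : ∀ᵐ s ∂Q ξ, s ∈ Ioi 0 := by
    simp only [ae_iff, mem_Ioi, not_lt]
    exact hQ ξ
  rw [Measure.restrict_eq_self_of_ae_mem hpos]
  refine lintegral_congr_ae (hpos.mono fun s (hs : 0 < s) => ?_)
  dsimp only
  rw [norm_smul, mem_sphere_zero_iff_norm.mp ξ.2, mul_one, norm_of_nonneg hs.le]

end

theorem stmt_4_general (d : ℕ)
    (σ : Measure (Metric.sphere (0 : EuclideanSpace ℝ (Fin d)) 1))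
    (Q : Kernel (Metric.sphere (0 : EuclideanSpace ℝ (Fin d)) 1) ℝ) [IsMarkovKernel Q]
    (hQsupp : ∀ ξ, Q ξ (Set.Iic 0) = 0)
    (α p : ℝ) (hα0 : 0 < α) (hαp : α < p)
    (q : Metric.sphere (0 : EuclideanSpace ℝ (Fin d)) 1 → ℝ → ℝ)
    (hq : ∀ ξ u, q ξ u = ∫ s in Set.Ioi (0 : ℝ), Real.exp (-(s * u ^ p)) ∂(Q ξ))
    (Qm Rm : Measure (EuclideanSpace ℝ (Fin d)))
    (hQm : Qm = σ.bind (fun ξ => (Q ξ).map (fun s : ℝ => s • (ξ : EuclideanSpace ℝ (Fin d)))))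
    (hRm : Rm = (Qm.withDensity (fun x => ENNReal.ofReal (‖x‖ ^ (α / p)))).map
        (fun x => ‖x‖ ^ (-(1 + 1 / p)) • x))
    (lam t : ℝ) (hlam : 0 < lam) (ht : 0 < t)
    (K : ℝ≥0∞)
    (hK : K = ∫⁻ ξ, (∫⁻ u in Set.Ioi (0 : ℝ),
        ENNReal.ofReal ((q ξ u - q ξ (u * Real.exp (lam * t))) * u ^ (-1 - α))) ∂σ)
    (hRfin : Rm Set.univ < ⊤) :
    K = Rm Set.univ *
        ENNReal.ofReal (α⁻¹ * Real.Gamma (1 - α / p) * (Real.exp (lam * t * α) - 1)) ∧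
      K < ⊤ := by
  have hq' : q = fun ξ u => temperingFunction (Q ξ) p u := funext₂ hq
  have hc : 1 ≤ exp (lam * t) := one_le_exp (by positivity)
  have hRm' : Rm univ = ∫⁻ ξ, ∫⁻ s in Ioi (0 : ℝ), ENNReal.ofReal (s ^ (α / p)) ∂Q ξ ∂σ := by
    rw [hRm, hQm, map_withDensity_bind_map_smul_univ σ Q hQsupp]
  have hK' : K = Rm univ *
      ENNReal.ofReal (α⁻¹ * Gamma (1 - α / p) * (exp (lam * t * α) - 1)) := by
    simp_rw [hK, hq', lintegral_temperingFunction_sub_mul_rpow _ hα0 hαp hc]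
    rw [lintegral_mul_const' _ _ ENNReal.ofReal_ne_top, hRm', ← exp_mul]
  exact ⟨hK', hK' ▸ ENNReal.mul_lt_top hRfin ENNReal.ofReal_lt_top⟩

/-- Proposition 2, part 2: if `0 < α < p` and the Rosiński measure `R` is finite, then
`K = R(ℝ^d) α⁻¹ Γ(1-α/p)(e^{λtα} - 1) < ∞`. -/
theorem stmt_4 (d : ℕ) (hd : 1 ≤ d)
    (σ : Measure (Metric.sphere (0 : EuclideanSpace ℝ (Fin d)) 1)) [IsFiniteMeasure σ]
    (Q : Kernel (Metric.sphere (0 : EuclideanSpace ℝ (Fin d)) 1) ℝ) [IsMarkovKernel Q]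
    (hQsupp : ∀ ξ, Q ξ (Set.Iic 0) = 0)
    (α p : ℝ) (hα0 : 0 < α) (hα2 : α < 2) (hαp : α < p)
    (q : Metric.sphere (0 : EuclideanSpace ℝ (Fin d)) 1 → ℝ → ℝ)
    (hq : ∀ ξ u, q ξ u = ∫ s in Set.Ioi (0 : ℝ), Real.exp (-(s * u ^ p)) ∂(Q ξ))
    (Qm Rm : Measure (EuclideanSpace ℝ (Fin d)))
    (hQm : Qm = σ.bind (fun ξ => (Q ξ).map (fun s : ℝ => s • (ξ : EuclideanSpace ℝ (Fin d)))))
    (hRm : Rm = (Qm.withDensity (fun x => ENNReal.ofReal (‖x‖ ^ (α / p)))).map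
        (fun x => ‖x‖ ^ (-(1 + 1 / p)) • x))
    (lam t : ℝ) (hlam : 0 < lam) (ht : 0 < t)
    (K : ℝ≥0∞)
    (hK : K = ∫⁻ ξ, (∫⁻ u in Set.Ioi (0 : ℝ),
        ENNReal.ofReal ((q ξ u - q ξ (u * Real.exp (lam * t))) * u ^ (-1 - α))) ∂σ)
    (hRfin : Rm Set.univ < ⊤) :
    K = Rm Set.univ *
        ENNReal.ofReal (α⁻¹ * Real.Gamma (1 - α / p) * (Real.exp (lam * t * α) - 1)) ∧
      K < ⊤ :=
  stmt_4_general d σ Q hQsupp α p hα0 hαp q hq Qm Rm hQm hRm lam t hlam ht K hK hRfin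
end

section
/- Let q : (0,∞) → [0,1] be nonincreasing, and suppose there exist ε > 0, M ≥ 0, and p > α > 0 such that |q(u) - q(v)| ≤ M |u^p - v^p| for all u, v ∈ (0,ε). Then for any λ, t > 0, the integral ∫_0^∞ (q(u) - q(u e^{λt})) u^{-1-α} du is finite (the integrand is nonnegative since q is nonincreasing). -/
/-!
Write `c = e^{λt}`. Near `0` both `u` and `u * c` lie in `(0, ε)`, so the Hölder-type bound gives
`q u - q (u * c) ≤ M |1 - c ^ p| u ^ p` and the integrand is `O(u ^ (p - 1 - α))`, integrable
because `p > α`. Away from `0` the difference of values of `q` is at most `1`, and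
`u ^ (-1 - α)` is integrable at infinity because `α > 0`.
-/

open MeasureTheory Set
open scoped ENNReal

theorem lintegral_ofReal_lt_top_of_ae_le {X : Type*} [MeasurableSpace X] {μ : Measure X}
    {f g : X → ℝ} (hg : Integrable g μ) (hfg : ∀ᵐ x ∂μ, f x ≤ g x) :
    ∫⁻ x, ENNReal.ofReal (f x) ∂μ < ∞ :=
  (lintegral_mono_ae (hfg.mono fun _ hx ↦ ENNReal.ofReal_le_ofReal hx)).trans_lt
    hg.lintegral_lt_top

section

variable {q : ℝ → ℝ} {c α : ℝ}

theorem sub_comp_mul_mul_rpow_le_rpow (hq01 : ∀ u, 0 < u → q u ∈ Icc (0 : ℝ) 1) (hc : 0 < c)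
    {u : ℝ} (hu : 0 < u) : (q u - q (u * c)) * u ^ (-1 - α) ≤ u ^ (-1 - α) := by
  have hqu := hq01 u hu
  have hquc := hq01 (u * c) (mul_pos hu hc)
  have hdiff : q u - q (u * c) ≤ 1 := by linarith [hqu.2, hquc.1]
  simpa using mul_le_mul_of_nonneg_right hdiff (Real.rpow_nonneg hu.le (-1 - α))

theorem sub_comp_mul_mul_rpow_le_of_abs_sub_le {ε M p : ℝ}
    (hLip : ∀ u v : ℝ, u ∈ Ioo 0 ε → v ∈ Ioo 0 ε → |q u - q v| ≤ M * |u ^ p - v ^ p|)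
    (hc : 0 < c) {u : ℝ} (hu : u ∈ Ioo 0 ε) (hcu : u * c ∈ Ioo 0 ε) :
    (q u - q (u * c)) * u ^ (-1 - α) ≤ M * |1 - c ^ p| * u ^ (p - 1 - α) := by
  have hu0 := hu.1
  have hdiff : q u - q (u * c) ≤ M * |1 - c ^ p| * u ^ p := by
    calc q u - q (u * c) ≤ |q u - q (u * c)| := le_abs_self _
      _ ≤ M * |u ^ p - (u * c) ^ p| := hLip u (u * c) hu hcu
      _ = M * |1 - c ^ p| * u ^ p := by
        rw [Real.mul_rpow hu0.le hc.le, ← mul_one_sub, abs_mul,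
          abs_of_pos (Real.rpow_pos_of_pos hu0 p)]
        ring
  calc (q u - q (u * c)) * u ^ (-1 - α)
      ≤ M * |1 - c ^ p| * u ^ p * u ^ (-1 - α) :=
        mul_le_mul_of_nonneg_right hdiff (Real.rpow_nonneg hu0.le _)
    _ = M * |1 - c ^ p| * u ^ (p - 1 - α) := by
        rw [mul_assoc, ← Real.rpow_add hu0]
        ring_nf

theorem lintegral_Ioi_ofReal_sub_comp_mul_mul_rpow_lt_top {ε M p : ℝ}
    (hq01 : ∀ u, 0 < u → q u ∈ Icc (0 : ℝ) 1) (hε : 0 < ε)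
    (hLip : ∀ u v : ℝ, u ∈ Ioo 0 ε → v ∈ Ioo 0 ε → |q u - q v| ≤ M * |u ^ p - v ^ p|)
    (hα : 0 < α) (hαp : α < p) (hc : 0 < c) :
    ∫⁻ u in Ioi 0, ENNReal.ofReal ((q u - q (u * c)) * u ^ (-1 - α)) < ∞ := by
  let δ := ε / (c + 1)
  have hδ : 0 < δ := by positivity
  have hδε : δ < ε := div_lt_self hε (by linarith)
  have hδcε : δ * c < ε := by
    rw [div_mul_eq_mul_div, div_lt_iff₀ (by linarith)]
    nlinarith
  have hnear : ∫⁻ u in Ioc 0 δ, ENNReal.ofReal ((q u - q (u * c)) * u ^ (-1 - α)) < ∞ := by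
    have hint : IntegrableOn (fun u : ℝ ↦ u ^ (p - 1 - α)) (Ioc 0 δ) :=
      (intervalIntegrable_iff_integrableOn_Ioc_of_le hδ.le).mp
        (intervalIntegral.intervalIntegrable_rpow' (by linarith))
    refine lintegral_ofReal_lt_top_of_ae_le (hint.const_mul (M * |1 - c ^ p|)) ?_
    refine (ae_restrict_mem measurableSet_Ioc).mono fun u hu ↦ ?_
    refine sub_comp_mul_mul_rpow_le_of_abs_sub_le hLip hc ⟨hu.1, hu.2.trans_lt hδε⟩
      ⟨mul_pos hu.1 hc, ?_⟩
    exact (mul_le_mul_of_nonneg_right hu.2 hc.le).trans_lt hδcε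
  have hfar : ∫⁻ u in Ioi δ, ENNReal.ofReal ((q u - q (u * c)) * u ^ (-1 - α)) < ∞ :=
    lintegral_ofReal_lt_top_of_ae_le (integrableOn_Ioi_rpow_of_lt (by linarith) hδ)
      ((ae_restrict_mem measurableSet_Ioi).mono fun u hu ↦
        sub_comp_mul_mul_rpow_le_rpow hq01 hc (hδ.trans hu))
  rw [← Ioc_union_Ioi_eq_Ioi hδ.le]
  exact (lintegral_union_le _ _ _).trans_lt (ENNReal.add_lt_top.mpr ⟨hnear, hfar⟩)

end

theorem stmt_6_general (q : ℝ → ℝ)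
    (hq01 : ∀ u : ℝ, 0 < u → q u ∈ Set.Icc (0 : ℝ) 1)
    (ε M p α : ℝ) (hε : 0 < ε) (hα : 0 < α) (hαp : α < p)
    (hLip : ∀ u v : ℝ, u ∈ Set.Ioo 0 ε → v ∈ Set.Ioo 0 ε →
      |q u - q v| ≤ M * |u ^ p - v ^ p|)
    (lam t : ℝ) :
    ∫⁻ u in Set.Ioi (0 : ℝ),
        ENNReal.ofReal ((q u - q (u * Real.exp (lam * t))) * u ^ (-1 - α)) < ⊤ :=
  lintegral_Ioi_ofReal_sub_comp_mul_mul_rpow_lt_top hq01 hε hLip hα hαp (Real.exp_pos _)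

/-- Finiteness of `K` for tempering functions of Class F: if `q : (0,∞) → [0,1]` is
nonincreasing and `|q(u) - q(v)| ≤ M|u^p - v^p|` on `(0,ε)` with `p > α > 0`, then
`∫_0^∞ (q(u) - q(ue^{λt})) u^{-1-α} du < ∞` for all `λ, t > 0`. -/
theorem stmt_6 (q : ℝ → ℝ)
    (hq01 : ∀ u : ℝ, 0 < u → q u ∈ Set.Icc (0 : ℝ) 1)
    (hmono : ∀ u v : ℝ, 0 < u → u ≤ v → q v ≤ q u)
    (ε M p α : ℝ) (hε : 0 < ε) (hM : 0 ≤ M) (hα : 0 < α) (hαp : α < p)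
    (hLip : ∀ u v : ℝ, u ∈ Set.Ioo 0 ε → v ∈ Set.Ioo 0 ε →
      |q u - q v| ≤ M * |u ^ p - v ^ p|)
    (lam t : ℝ) (hlam : 0 < lam) (ht : 0 < t) :
    ∫⁻ u in Set.Ioi (0 : ℝ),
        ENNReal.ofReal ((q u - q (u * Real.exp (lam * t))) * u ^ (-1 - α)) < ⊤ :=
  stmt_6_general q hq01 ε M p α hε hα hαp hLip lam t
end

section
/- Let Q be a Borel probability measure on (0,∞), let ζ > 0 satisfy Q((0,ζ)) = 0, let 0 < α < p and λ, t > 0, and suppose m₁ = ∫_{(0,∞)} s Q(ds) < ∞ and m = ∫_{(0,∞)} s^{α/p} Q(ds) ∈ (0,∞). Set κ = α / (Γ(1 - α/p)(e^{λtα} - 1) m), define f(u) = κ ∫_{(0,∞)} (e^{-s u^p} - e^{-s u^p e^{pλt}}) Q(ds) · u^{-1-α} for u > 0, let g₂ be the GGa(p-α, p, ζ) pdf, and set V₂ = ζ^{α/p - 1} · α (e^{tλp} - 1) m₁ / (p (e^{tλα} - 1) m). Then f(u) ≤ V₂ g₂(u) for all u > 0. -/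
/-!
On the support of `Q` we have `s ≥ ζ`, and with `x = s uᵖ`, `c = e^{pλt}`,
`e^{-x} - e^{-cx} = e^{-x} (1 - e^{-(c-1)x}) ≤ (c - 1) x e^{-x} ≤ (c - 1) s uᵖ e^{-ζuᵖ}`.
Integrating against `Q` bounds `f u` by `κ (c - 1) m₁ u^{p-α-1} e^{-ζ uᵖ}`, which is `V₂ g₂(u)`
once the Gamma factors and the powers of `ζ` are collected.
-/

open MeasureTheory Real

theorem Real.exp_neg_sub_exp_neg_mul_le (x c : ℝ) :
    exp (-x) - exp (-(x * c)) ≤ (c - 1) * x * exp (-x) := by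
  have hsplit : exp (-x) - exp (-(x * c)) = exp (-x) * (1 - exp (-(x * (c - 1)))) := by
    rw [mul_sub, mul_one, ← exp_add]; ring_nf
  have hlin : 1 - exp (-(x * (c - 1))) ≤ x * (c - 1) := by
    linarith [add_one_le_exp (-(x * (c - 1)))]
  calc exp (-x) - exp (-(x * c)) = exp (-x) * (1 - exp (-(x * (c - 1)))) := hsplit
    _ ≤ exp (-x) * (x * (c - 1)) := by gcongr
    _ = (c - 1) * x * exp (-x) := by ring

theorem Real.exp_neg_mul_le_exp_neg {x c : ℝ} (hx : 0 ≤ x) (hc : 1 ≤ c) :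
    exp (-(x * c)) ≤ exp (-x) :=
  exp_le_exp.mpr (neg_le_neg (le_mul_of_one_le_right hx hc))

theorem ae_restrict_Ioi_le_of_measure_Ioo_eq_zero {X : Type*} [MeasurableSpace X]
    [TopologicalSpace X] [LinearOrder X] [OrderClosedTopology X] [OpensMeasurableSpace X]
    {μ : Measure X} {a b : X}
    (h : μ (Set.Ioo a b) = 0) : ∀ᵐ s ∂μ.restrict (Set.Ioi a), b ≤ s := by
  rw [ae_restrict_iff' measurableSet_Ioi, ae_iff]
  refine measure_mono_null (fun s hs => ?_) h
  push Not at hs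
  exact hs

theorem setIntegral_exp_neg_sub_exp_neg_mul_le {Q : Measure ℝ} {ζ v c : ℝ}
    (hQ : Q (Set.Ioo 0 ζ) = 0) (hint : IntegrableOn (fun s : ℝ => s) (Set.Ioi 0) Q)
    (hv : 0 ≤ v) (hc : 1 ≤ c) :
    ∫ s in Set.Ioi (0 : ℝ), (exp (-(s * v)) - exp (-(s * v * c))) ∂Q ≤
      (c - 1) * exp (-(ζ * v)) * v * ∫ s in Set.Ioi (0 : ℝ), s ∂Q := by
  have hsupp := ae_restrict_Ioi_le_of_measure_Ioo_eq_zero hQ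
  have hpos : ∀ᵐ s ∂Q.restrict (Set.Ioi 0), 0 < s := ae_restrict_mem measurableSet_Ioi
  rw [← integral_const_mul]
  refine integral_mono_of_nonneg ?_ (hint.const_mul _) ?_
  · filter_upwards [hpos] with s hs
    exact sub_nonneg.mpr (exp_neg_mul_le_exp_neg (by positivity) hc)
  · filter_upwards [hsupp, hpos] with s hζs hs
    calc exp (-(s * v)) - exp (-(s * v * c)) ≤ (c - 1) * (s * v) * exp (-(s * v)) :=
          exp_neg_sub_exp_neg_mul_le _ _
      _ ≤ (c - 1) * (s * v) * exp (-(ζ * v)) := by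
          have : 0 ≤ c - 1 := by linarith
          gcongr
      _ = (c - 1) * exp (-(ζ * v)) * v * s := by ring

theorem stmt_9_general (Q : Measure ℝ)
    (ζ : ℝ) (hζ : 0 < ζ) (hQζ : Q (Set.Ioo 0 ζ) = 0)
    (α p lam t : ℝ) (hα : 0 < α) (hαp : α < p) (hlam : 0 < lam) (ht : 0 < t)
    (hint₁ : IntegrableOn (fun s : ℝ => s) (Set.Ioi 0) Q)
    (m₁ m : ℝ)
    (hm₁ : m₁ = ∫ s in Set.Ioi (0 : ℝ), s ∂Q)
    (hmpos : 0 < m)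
    (κ : ℝ)
    (hκ : κ = α / (Real.Gamma (1 - α / p) * (Real.exp (lam * t * α) - 1) * m))
    (f g₂ : ℝ → ℝ)
    (hf : ∀ u, f u = κ * (∫ s in Set.Ioi (0 : ℝ),
        (Real.exp (-(s * u ^ p)) - Real.exp (-(s * u ^ p * Real.exp (p * lam * t)))) ∂Q) *
        u ^ (-1 - α))
    (hg₂ : ∀ u, g₂ u = p * ζ ^ ((p - α) / p) / Real.Gamma ((p - α) / p) *
        u ^ (p - α - 1) * Real.exp (-(ζ * u ^ p)))
    (V₂ : ℝ)
    (hV₂ : V₂ = ζ ^ (α / p - 1) *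
        (α * (Real.exp (t * lam * p) - 1) * m₁) / (p * (Real.exp (t * lam * α) - 1) * m)) :
    ∀ u : ℝ, 0 < u → f u ≤ V₂ * g₂ u := by
  intro u hu
  have hp : 0 < p := hα.trans hαp
  have hΓ : 0 < Gamma (1 - α / p) := Gamma_pos_of_pos (by rw [sub_pos, div_lt_one hp]; exact hαp)
  have hexp : 0 < exp (lam * t * α) - 1 := sub_pos.mpr (one_lt_exp_iff.mpr (by positivity))
  have hκ_nonneg : 0 ≤ κ := by rw [hκ]; positivity
  calc f u
      ≤ κ * ((exp (p * lam * t) - 1) * exp (-(ζ * u ^ p)) * u ^ p * m₁) * u ^ (-1 - α) := by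
        rw [hf, hm₁]
        gcongr
        exact setIntegral_exp_neg_sub_exp_neg_mul_le hQζ hint₁ (by positivity)
          (one_le_exp (by positivity))
    _ = V₂ * g₂ u := by
        have hζ_pow : ζ ^ (α / p - 1) = (ζ ^ ((p - α) / p))⁻¹ := by
          rw [← rpow_neg hζ.le]; congr 1; field_simp; ring
        have hu_pow : u ^ (p - α - 1) = u ^ p * u ^ (-1 - α) := by
          rw [← rpow_add hu]; ring_nf
        rw [hV₂, hg₂, hκ, hu_pow, ← one_sub_div hp.ne', hζ_pow,
          show t * lam * p = p * lam * t by ring, show t * lam * α = lam * t * α by ring]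
        field_simp

/-- Proposition 4: when `Q((0,ζ)) = 0` with `ζ > 0`, the density `f` is dominated by
`V₂ g₂`, where `g₂` is the pdf of the generalized gamma distribution `GGa(p-α, p, ζ)`. -/
theorem stmt_9 (Q : Measure ℝ) [IsProbabilityMeasure Q] (hQsupp : Q (Set.Iic 0) = 0)
    (ζ : ℝ) (hζ : 0 < ζ) (hQζ : Q (Set.Ioo 0 ζ) = 0)
    (α p lam t : ℝ) (hα : 0 < α) (hαp : α < p) (hlam : 0 < lam) (ht : 0 < t)
    (hint₁ : IntegrableOn (fun s : ℝ => s) (Set.Ioi 0) Q)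
    (hint : IntegrableOn (fun s : ℝ => s ^ (α / p)) (Set.Ioi 0) Q)
    (m₁ m : ℝ)
    (hm₁ : m₁ = ∫ s in Set.Ioi (0 : ℝ), s ∂Q)
    (hm : m = ∫ s in Set.Ioi (0 : ℝ), s ^ (α / p) ∂Q) (hmpos : 0 < m)
    (κ : ℝ)
    (hκ : κ = α / (Real.Gamma (1 - α / p) * (Real.exp (lam * t * α) - 1) * m))
    (f g₂ : ℝ → ℝ)
    (hf : ∀ u, f u = κ * (∫ s in Set.Ioi (0 : ℝ),
        (Real.exp (-(s * u ^ p)) - Real.exp (-(s * u ^ p * Real.exp (p * lam * t)))) ∂Q) *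
        u ^ (-1 - α))
    (hg₂ : ∀ u, g₂ u = p * ζ ^ ((p - α) / p) / Real.Gamma ((p - α) / p) *
        u ^ (p - α - 1) * Real.exp (-(ζ * u ^ p)))
    (V₂ : ℝ)
    (hV₂ : V₂ = ζ ^ (α / p - 1) *
        (α * (Real.exp (t * lam * p) - 1) * m₁) / (p * (Real.exp (t * lam * α) - 1) * m)) :
    ∀ u : ℝ, 0 < u → f u ≤ V₂ * g₂ u :=
  stmt_9_general Q ζ hζ hQζ α p lam t hα hαp hlam ht hint₁ m₁ m hm₁ hmpos κ hκ f g₂ hf hg₂ V₂ hV₂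
end
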